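/- arXiv:1503.01269 — 6 statements merged into one kernel-verified Lean document; each statement's English description precedes it below -/
import Mathlib

section
/- Let 0 ≤ σ ≤ μ < 1. Among all real polynomials p of degree 2 with p(1) = 1, the minimum over p of the maximum of |p(λ)| over λ ∈ {σ, -σ, μ, -μ} equals (μ² - σ²)/(2 - μ² - σ²), and it is achieved by p(λ) = (λ² - μ²/2 - σ²/2)/(1 - μ²/2 - σ²/2). -/
/-!
Write `p x = a + b x + c x²`. On the nodes `±μ` the even part `a + c μ²` and the odd part `b μ`
satisfy `a + c μ² + μ |b| = max (p μ) (p (-μ))`, and on `±σ` the even part is the average of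
`p σ` and `p (-σ)`. Linear interpolation in `x²` through `σ², μ², 1` gives
`μ² - σ² = (1 - σ²)(a + c μ²) - (1 - μ²)(a + c σ²) + (μ² - σ²) b` whenever `p 1 = 1`, and
`μ² - σ² ≤ μ (1 - σ²)` lets the odd term be absorbed; so `μ² - σ² ≤ (2 - μ² - σ²) M` as soon as
`p ≤ M` at `±μ` and `p ≥ -M` at `±σ`. The filter in the statement equioscillates with exactly
these signs, so the bound is attained.
-/

open Polynomial

theorem Polynomial.eval_eq_of_natDegree_le_two {R : Type*} [CommSemiring R] {p : R[X]}
    (hp : p.natDegree ≤ 2) (x : R) :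
    p.eval x = p.coeff 0 + p.coeff 1 * x + p.coeff 2 * x ^ 2 := by
  rw [eval_eq_sum_range' (by omega : p.natDegree < 3)]
  simp [Finset.sum_range_succ]

theorem sq_sub_sq_le_of_quadratic_bounds {a b c σ μ M : ℝ} (habc : a + b + c = 1)
    (hσ : 0 ≤ σ) (hσμ : σ ≤ μ) (hμ : μ ≤ 1)
    (hμ_pos : a + b * μ + c * μ ^ 2 ≤ M) (hμ_neg : a + b * (-μ) + c * (-μ) ^ 2 ≤ M)
    (hσ_pos : -M ≤ a + b * σ + c * σ ^ 2) (hσ_neg : -M ≤ a + b * (-σ) + c * (-σ) ^ 2) :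
    μ ^ 2 - σ ^ 2 ≤ (2 - μ ^ 2 - σ ^ 2) * M := by
  have hgap : 0 ≤ μ ^ 2 - σ ^ 2 := by nlinarith
  have hgap_le : μ ^ 2 - σ ^ 2 ≤ μ * (1 - σ ^ 2) := by nlinarith
  have hμ_even : a + c * μ ^ 2 + μ * |b| ≤ M := by
    rcases abs_choice b with h | h <;> rw [h] <;> linarith
  have hσ_even : -M ≤ a + c * σ ^ 2 := by linarith
  have hodd : (μ ^ 2 - σ ^ 2) * b ≤ (1 - σ ^ 2) * (μ * |b|) := by
    calc (μ ^ 2 - σ ^ 2) * b ≤ (μ ^ 2 - σ ^ 2) * |b| := by gcongr; exact le_abs_self b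
      _ ≤ μ * (1 - σ ^ 2) * |b| := by gcongr
      _ = (1 - σ ^ 2) * (μ * |b|) := by ring
  have h1σ : 0 ≤ 1 - σ ^ 2 := by nlinarith
  have h1μ : 0 ≤ 1 - μ ^ 2 := by nlinarith
  calc μ ^ 2 - σ ^ 2
      = (1 - σ ^ 2) * (a + c * μ ^ 2) + (μ ^ 2 - σ ^ 2) * b - (1 - μ ^ 2) * (a + c * σ ^ 2) := by
        linear_combination (σ ^ 2 - μ ^ 2) * habc
    _ ≤ (1 - σ ^ 2) * (a + c * μ ^ 2 + μ * |b|) + (1 - μ ^ 2) * M := by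
        linarith [mul_le_mul_of_nonneg_left hσ_even h1μ]
    _ ≤ (1 - σ ^ 2) * M + (1 - μ ^ 2) * M := by gcongr
    _ = (2 - μ ^ 2 - σ ^ 2) * M := by ring

theorem optimal_filter_eq_two_mul_sq_sub_div (σ μ x : ℝ) :
    (x ^ 2 - μ ^ 2 / 2 - σ ^ 2 / 2) / (1 - μ ^ 2 / 2 - σ ^ 2 / 2) =
      (2 * x ^ 2 - μ ^ 2 - σ ^ 2) / (2 - μ ^ 2 - σ ^ 2) := by
  rw [← mul_div_mul_left _ _ (two_ne_zero' ℝ)]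
  congr 1 <;> ring

/-- Optimal second-order polynomial filter: among real polynomials `p` of degree at most 2
with `p 1 = 1`, the minimal value of `max |p λ|` over `λ ∈ {σ, -σ, μ, -μ}` equals
`(μ² - σ²)/(2 - μ² - σ²)`, achieved by `p λ = (λ² - μ²/2 - σ²/2)/(1 - μ²/2 - σ²/2)`. -/
theorem optimal_second_order_filter (σ μ : ℝ) (hσ : 0 ≤ σ) (hσμ : σ ≤ μ) (hμ : μ < 1) :
    (∀ p : Polynomial ℝ, p.natDegree ≤ 2 → p.eval 1 = 1 →
      (μ ^ 2 - σ ^ 2) / (2 - μ ^ 2 - σ ^ 2) ≤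
        max (max |p.eval σ| |p.eval (-σ)|) (max |p.eval μ| |p.eval (-μ)|)) ∧
    (let p : ℝ → ℝ := fun l => (l ^ 2 - μ ^ 2 / 2 - σ ^ 2 / 2) / (1 - μ ^ 2 / 2 - σ ^ 2 / 2);
      max (max |p σ| |p (-σ)|) (max |p μ| |p (-μ)|) =
        (μ ^ 2 - σ ^ 2) / (2 - μ ^ 2 - σ ^ 2)) := by
  have hD : 0 < 2 - μ ^ 2 - σ ^ 2 := by nlinarith
  refine ⟨fun p hp hp1 => ?_, ?_⟩
  · set M := max (max |p.eval σ| |p.eval (-σ)|) (max |p.eval μ| |p.eval (-μ)|)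
    have hle : ∀ x ∈ ({σ, -σ, μ, -μ} : Set ℝ), |p.eval x| ≤ M := by
      simp only [Set.mem_insert_iff, Set.mem_singleton_iff]
      rintro x (rfl | rfl | rfl | rfl) <;> simp [M]
    simp only [eval_eq_of_natDegree_le_two hp] at hp1 hle
    rw [div_le_iff₀ hD, mul_comm]
    exact sq_sub_sq_le_of_quadratic_bounds (by simpa using hp1) hσ hσμ hμ.le
      (le_of_abs_le (hle μ (by simp))) (le_of_abs_le (hle (-μ) (by simp)))
      (neg_le_of_abs_le (hle σ (by simp))) (neg_le_of_abs_le (hle (-σ) (by simp)))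
  · have ht : 0 ≤ (μ ^ 2 - σ ^ 2) / (2 - μ ^ 2 - σ ^ 2) := div_nonneg (by nlinarith) hD.le
    have hσval : (2 * σ ^ 2 - μ ^ 2 - σ ^ 2) / (2 - μ ^ 2 - σ ^ 2) =
        -((μ ^ 2 - σ ^ 2) / (2 - μ ^ 2 - σ ^ 2)) := by ring
    have hμval : (2 * μ ^ 2 - μ ^ 2 - σ ^ 2) / (2 - μ ^ 2 - σ ^ 2) =
        (μ ^ 2 - σ ^ 2) / (2 - μ ^ 2 - σ ^ 2) := by ring
    simp only [optimal_filter_eq_two_mul_sq_sub_div, neg_sq, hσval, hμval, abs_neg,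
      abs_of_nonneg ht, max_self]
end

section
/- If a symmetric matrix P with P·1 = 1 (row sums one) has exactly two distinct eigenvalues λ and -λ (for some λ ≠ 1) on the subspace orthogonal to the all-ones vector, then the matrix (P - λI)(P + λI)/(1 - λ²) equals the orthogonal projection (1/N)·11ᵀ onto the consensus subspace, i.e. two steps of the polynomial filter reach exact average consensus. -/
/-!
Symmetry turns the row sums of `P` into column sums, so `P` preserves the coordinate sum. Hence an
eigenvector of `P` either has coordinate sum zero, and is then killed by `(P - λ)(P + λ)` and by
`11ᵀ`, or it is constant, because `λ ≠ ±1` rules out the eigenvalue `1` on the sum-zero space. So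
both sides agree on every eigenvector of `P`, and eigenvectors of a symmetric matrix span.
-/

open Matrix

theorem Matrix.IsHermitian.ext_of_mulVec_eigenvector {𝕜 n : Type*} [RCLike 𝕜] [Fintype n]
    [DecidableEq n] {P A B : Matrix n n 𝕜} (hP : P.IsHermitian)
    (h : ∀ (t : 𝕜) (v : n → 𝕜), P *ᵥ v = t • v → A *ᵥ v = B *ᵥ v) : A = B := by
  refine (toLpLin 2 2).injective (hP.eigenvectorBasis.toBasis.ext fun j => ?_)
  simp only [OrthonormalBasis.coe_toBasis, toLpLin_apply]
  rw [h _ _ (by rw [hP.mulVec_eigenvectorBasis, RCLike.real_smul_eq_coe_smul (K := 𝕜)])]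

theorem Matrix.IsSymm.sum_mulVec_of_mulVec_one {R n : Type*} [CommSemiring R] [Fintype n]
    {P : Matrix n n R} (hsymm : P.IsSymm) (hP1 : P *ᵥ 1 = 1) (x : n → R) :
    ∑ i, (P *ᵥ x) i = ∑ i, x i := by
  have hcol : 1 ᵥ* P = 1 := by rw [← mulVec_transpose, hsymm.eq, hP1]
  rw [← one_dotProduct, dotProduct_mulVec, hcol, one_dotProduct]

theorem Matrix.sub_smul_one_mulVec_of_mulVec_eq_smul {R n : Type*} [CommRing R] [Fintype n]
    [DecidableEq n] {P : Matrix n n R} {t : R} {v : n → R} (hv : P *ᵥ v = t • v) (c : R) :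
    (P - c • 1) *ᵥ v = (t - c) • v := by
  rw [sub_mulVec, smul_mulVec, one_mulVec, hv, sub_smul]

theorem Matrix.of_const_one_mulVec {R m n : Type*} [CommSemiring R] [Fintype n] (v : n → R) :
    of (fun (_ : m) (_ : n) => (1 : R)) *ᵥ v = (∑ i, v i) • 1 := by
  ext i; simp [mulVec, dotProduct]

section
variable {n : Type*} [Fintype n] {P : Matrix n n ℝ}

theorem eq_smul_one_of_mulVec_eq_smul_of_sum_ne_zero (hsymm : P.IsSymm) (hP1 : P *ᵥ 1 = 1)
    (hfix : ∀ x : n → ℝ, ∑ i, x i = 0 → P *ᵥ x = x → x = 0) {t : ℝ} {v : n → ℝ}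
    (hv : P *ᵥ v = t • v) (hsum : ∑ i, v i ≠ 0) :
    t = 1 ∧ v = ((Fintype.card n : ℝ)⁻¹ * ∑ i, v i) • 1 := by
  have ht : t = 1 := by
    have := hsymm.sum_mulVec_of_mulVec_one hP1 v
    rw [hv] at this
    simp only [Pi.smul_apply, smul_eq_mul, ← Finset.mul_sum] at this
    exact (mul_eq_right₀ hsum).mp this
  subst ht
  have hcard : (Fintype.card n : ℝ) ≠ 0 := by
    obtain ⟨i, -, -⟩ := Finset.exists_ne_zero_of_sum_ne_zero hsum
    have : Nonempty n := ⟨i⟩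
    positivity
  refine ⟨rfl, sub_eq_zero.mp (hfix _ ?_ ?_)⟩
  · simp [Finset.sum_sub_distrib, hcard]
  · rw [mulVec_sub, mulVec_smul, hP1, hv, one_smul]

theorem mulVec_eigenvector_eq_of_two_eigenvalues [DecidableEq n] (hsymm : P.IsSymm)
    (hP1 : P *ᵥ 1 = 1) {lam : ℝ} (hlam : 1 - lam ^ 2 ≠ 0)
    (heig : ∀ (t : ℝ) (x : n → ℝ), x ≠ 0 → (∑ i, x i) = 0 → P *ᵥ x = t • x →
      t = lam ∨ t = -lam)
    {t : ℝ} {v : n → ℝ} (hv : P *ᵥ v = t • v) :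
    ((1 - lam ^ 2)⁻¹ • ((P - lam • 1) * (P + lam • 1))) *ᵥ v =
      ((Fintype.card n : ℝ)⁻¹ • of fun _ _ => (1 : ℝ)) *ᵥ v := by
  have hfilter : ((P - lam • 1) * (P + lam • 1)) *ᵥ v = ((t - lam) * (t + lam)) • v := by
    rw [← mulVec_mulVec, ← sub_neg_eq_add, ← neg_smul,
      sub_smul_one_mulVec_of_mulVec_eq_smul hv, mulVec_smul,
      sub_smul_one_mulVec_of_mulVec_eq_smul hv, smul_smul, sub_neg_eq_add, mul_comm]
  rw [smul_mulVec, smul_mulVec, hfilter, of_const_one_mulVec]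
  by_cases hsum : ∑ i, v i = 0
  · rcases eq_or_ne v 0 with rfl | hv0
    · simp
    · rcases heig t v hv0 hsum hv with rfl | rfl <;> simp [hsum]
  · have hfix : ∀ x : n → ℝ, ∑ i, x i = 0 → P *ᵥ x = x → x = 0 := fun x hx hPx => by
      by_contra hx0
      apply hlam
      rcases heig 1 x hx0 hx (by rw [one_smul, hPx]) with h | h <;> nlinarith [h]
    obtain ⟨rfl, hconst⟩ := eq_smul_one_of_mulVec_eq_smul_of_sum_ne_zero hsymm hP1 hfix hv hsum
    rw [smul_smul, show (1 - lam) * (1 + lam) = 1 - lam ^ 2 by ring, inv_mul_cancel₀ hlam,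
      one_smul, smul_smul]
    exact hconst

end

theorem two_step_finite_time_consensus_general {N : ℕ}
    (P : Matrix (Fin N) (Fin N) ℝ) (hsymm : P.IsSymm) (hP1 : P *ᵥ 1 = 1)
    (lam : ℝ) (hlam1 : lam ≠ 1) (hlam2 : lam ≠ -1)
    (heig : ∀ (t : ℝ) (x : Fin N → ℝ), x ≠ 0 → (∑ i, x i) = 0 → P *ᵥ x = t • x →
      t = lam ∨ t = -lam) :
    (1 - lam ^ 2)⁻¹ • ((P - lam • 1) * (P + lam • 1)) =
      (N : ℝ)⁻¹ • Matrix.of (fun _ _ => (1 : ℝ)) := by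
  have hlam : 1 - lam ^ 2 ≠ 0 := by
    rw [show 1 - lam ^ 2 = (1 - lam) * (1 + lam) by ring]
    exact mul_ne_zero (sub_ne_zero.mpr hlam1.symm) fun h => hlam2 (by linarith)
  refine (isHermitian_iff_isSymm.mpr hsymm).ext_of_mulVec_eigenvector fun t v hv => ?_
  simpa only [Fintype.card_fin] using
    mulVec_eigenvector_eq_of_two_eigenvalues hsymm hP1 hlam heig hv

/-- If a symmetric `P` with row sums one has exactly the two distinct eigenvalues `λ` and `-λ`
on the subspace orthogonal to the all-ones vector, then `(P - λI)(P + λI)/(1-λ²)` is the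
averaging projection `(1/N)·11ᵀ`: two filter steps reach exact average consensus. -/
theorem two_step_finite_time_consensus {N : ℕ} (hN : 0 < N)
    (P : Matrix (Fin N) (Fin N) ℝ) (hsymm : P.IsSymm) (hP1 : P *ᵥ 1 = 1)
    (lam : ℝ) (hlam1 : lam ≠ 1) (hlam2 : lam ≠ -1)
    (heig : ∀ (t : ℝ) (x : Fin N → ℝ), x ≠ 0 → (∑ i, x i) = 0 → P *ᵥ x = t • x →
      t = lam ∨ t = -lam)
    (hex1 : ∃ x : Fin N → ℝ, x ≠ 0 ∧ (∑ i, x i) = 0 ∧ P *ᵥ x = lam • x)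
    (hex2 : ∃ x : Fin N → ℝ, x ≠ 0 ∧ (∑ i, x i) = 0 ∧ P *ᵥ x = (-lam) • x) :
    (1 - lam ^ 2)⁻¹ • ((P - lam • 1) * (P + lam • 1)) =
      (N : ℝ)⁻¹ • Matrix.of (fun _ _ => (1 : ℝ)) :=
  two_step_finite_time_consensus_general P hsymm hP1 lam hlam1 hlam2 heig
end

section
/- Consider the complete bipartite graph K(2,m) with m ≥ 2, with weight p > 0 on edges incident to one hub and weight q > 0 on edges incident to the other hub (edges between each hub and the m leaf nodes). The nonzero Laplacian eigenvalues are proportional to p+q, and (m+1)(p+q)/2 ± √((m+1)²(p+q)² - 4pqm(m+2))/2. Choosing q = (1/2)(m + √(m²-4))·p makes the set of distinct nonzero eigenvalues have exactly two elements. -/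
/-!
Vectors that vanish on the hubs and sum to zero over the leaves lie in the eigenspace of `p + q`.
Vectors constant on the leaves form an invariant subspace on which the Laplacian acts by a
`3 × 3` matrix with characteristic polynomial `t (t² - (m+1)(p+q) t + m(m+2)pq)`, and every
eigenvector for an eigenvalue other than `p + q` lies in it. For the special `q` one has
`p² - mpq + q² = 0`, so the discriminant is `((m-1)(p+q))²` and the two roots of the quadratic
are `p + q` and `m (p + q)`.
-/

open Matrix

/-- Weighted Laplacian of the complete bipartite graph `K(2,m)`: hub `0` is joined to each of
the `m` leaves with weight `p`, hub `1` with weight `q`. -/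
def K2mLaplacian (m : ℕ) (p q : ℝ) :
    Matrix (Fin 2 ⊕ Fin m) (Fin 2 ⊕ Fin m) ℝ :=
  fun i j =>
    match i, j with
    | .inl a, .inl b => if a = b then (if a = 0 then m * p else m * q) else 0
    | .inl a, .inr _ => if a = 0 then -p else -q
    | .inr _, .inl a => if a = 0 then -p else -q
    | .inr a, .inr b => if a = b then p + q else 0

namespace K2mLaplacian

variable {m : ℕ} {p q : ℝ}

lemma mulVec_eq (x : Fin 2 ⊕ Fin m → ℝ) :
    K2mLaplacian m p q *ᵥ x = Sum.elim
      ![m * p * x (.inl 0) - p * ∑ j, x (.inr j),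
        m * q * x (.inl 1) - q * ∑ j, x (.inr j)]
      (fun j => (p + q) * x (.inr j) - p * x (.inl 0) - q * x (.inl 1)) := by
  funext i
  rcases i with a | j
  · fin_cases a <;>
      simp [K2mLaplacian, mulVec, dotProduct, Fintype.sum_sum_type, Finset.mul_sum,
        sub_eq_add_neg]
  · simp [K2mLaplacian, mulVec, dotProduct, Fintype.sum_sum_type, Fin.sum_univ_two,
      sub_eq_add_neg]
    ring

lemma mulVec_inr_of_sum_eq_zero (y : Fin m → ℝ) (hy : ∑ j, y j = 0) :
    K2mLaplacian m p q *ᵥ Sum.elim (0 : Fin 2 → ℝ) y =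
      (p + q) • Sum.elim (0 : Fin 2 → ℝ) y := by
  rw [mulVec_eq]
  funext i
  rcases i with a | j
  · fin_cases a <;> simp [hy]
  · simp

lemma exists_mulVec_eq_add_smul (hm : 2 ≤ m) :
    ∃ x : Fin 2 ⊕ Fin m → ℝ, x ≠ 0 ∧ K2mLaplacian m p q *ᵥ x = (p + q) • x := by
  let i₀ : Fin m := ⟨0, by omega⟩
  let i₁ : Fin m := ⟨1, by omega⟩
  have hne : i₀ ≠ i₁ := by simp [i₀, i₁, Fin.ext_iff]
  let y : Fin m → ℝ := Pi.single i₀ 1 - Pi.single i₁ 1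
  refine ⟨Sum.elim 0 y, fun h => ?_, mulVec_inr_of_sum_eq_zero y ?_⟩
  · simpa [y, hne] using congrFun h (.inr i₀)
  · simp [y, Finset.sum_sub_distrib]

/-- The Laplacian restricted to the invariant subspace of vectors that are constant on the
leaves, in the coordinates (hub 0, hub 1, common leaf value). -/
def quotientMatrix (m : ℕ) (p q : ℝ) : Matrix (Fin 3) (Fin 3) ℝ :=
  !![m * p, 0, -(m * p); 0, m * q, -(m * q); -p, -q, p + q]

def leafConst (m : ℕ) (v : Fin 3 → ℝ) : Fin 2 ⊕ Fin m → ℝ :=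
  Sum.elim ![v 0, v 1] fun _ => v 2

lemma mulVec_leafConst (v : Fin 3 → ℝ) :
    K2mLaplacian m p q *ᵥ leafConst m v = leafConst m (quotientMatrix m p q *ᵥ v) := by
  rw [mulVec_eq]
  funext i
  rcases i with a | j
  · fin_cases a <;>
      simp [leafConst, quotientMatrix, mulVec, dotProduct, Fin.sum_univ_three] <;> ring
  · simp [leafConst, quotientMatrix, mulVec, dotProduct, Fin.sum_univ_three]; ring

lemma leafConst_smul (t : ℝ) (v : Fin 3 → ℝ) :
    leafConst m (t • v) = t • leafConst m v := by
  funext i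
  rcases i with a | j
  · fin_cases a <;> simp [leafConst]
  · simp [leafConst]

lemma leafConst_zero : leafConst m 0 = 0 := by
  simpa using leafConst_smul (m := m) 0 0

lemma leafConst_injective (hm : 0 < m) : Function.Injective (leafConst m) := by
  intro v w h
  funext k
  fin_cases k
  · simpa [leafConst] using congrFun h (.inl 0)
  · simpa [leafConst] using congrFun h (.inl 1)
  · simpa [leafConst] using congrFun h (.inr ⟨0, hm⟩)

lemma det_smul_one_sub_quotientMatrix (t : ℝ) :
    (t • 1 - quotientMatrix m p q).det
      = t * (t ^ 2 - (m + 1) * (p + q) * t + m * (m + 2) * p * q) := by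
  simp [det_fin_three, quotientMatrix]
  ring

lemma exists_mulVec_eq_smul_of_quadratic (hm : 0 < m) {t : ℝ}
    (ht : t ^ 2 - (m + 1) * (p + q) * t + m * (m + 2) * p * q = 0) :
    ∃ x : Fin 2 ⊕ Fin m → ℝ, x ≠ 0 ∧ K2mLaplacian m p q *ᵥ x = t • x := by
  obtain ⟨v, hv, hker⟩ := exists_mulVec_eq_zero_iff.mpr <|
    (det_smul_one_sub_quotientMatrix (m := m) (p := p) (q := q) t).trans (by rw [ht, mul_zero])
  refine ⟨leafConst m v, fun h => hv (leafConst_injective hm (h.trans leafConst_zero.symm)), ?_⟩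
  rw [sub_mulVec, smul_mulVec, one_mulVec, sub_eq_zero] at hker
  rw [mulVec_leafConst, ← hker, leafConst_smul]

lemma eq_leafConst_of_mulVec_eq_smul {t : ℝ} (ht : t ≠ p + q) {x : Fin 2 ⊕ Fin m → ℝ}
    (h : K2mLaplacian m p q *ᵥ x = t • x) :
    x = leafConst m ![x (.inl 0), x (.inl 1), (p * x (.inl 0) + q * x (.inl 1)) / (p + q - t)] := by
  have hpqt : p + q - t ≠ 0 := sub_ne_zero.mpr ht.symm
  funext i
  rcases i with a | j
  · fin_cases a <;> rfl
  · have hj := congrFun h (.inr j)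
    rw [mulVec_eq] at hj
    simp only [Sum.elim_inr, Pi.smul_apply, smul_eq_mul] at hj
    simp only [leafConst, Sum.elim_inr, Matrix.cons_val_two, Matrix.tail_cons, Matrix.head_cons]
    rw [eq_div_iff hpqt]
    linarith

lemma eq_add_or_mul_quadratic_eq_zero (hm : 0 < m) {t : ℝ} {x : Fin 2 ⊕ Fin m → ℝ}
    (hx : x ≠ 0) (h : K2mLaplacian m p q *ᵥ x = t • x) :
    t = p + q ∨ t * (t ^ 2 - (m + 1) * (p + q) * t + m * (m + 2) * p * q) = 0 := by
  refine or_iff_not_imp_left.mpr fun ht => ?_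
  set v : Fin 3 → ℝ :=
    ![x (.inl 0), x (.inl 1), (p * x (.inl 0) + q * x (.inl 1)) / (p + q - t)]
  have hxv : x = leafConst m v := eq_leafConst_of_mulVec_eq_smul ht h
  have hv : v ≠ 0 := fun hv0 => hx (by rw [hxv, hv0, leafConst_zero])
  have hBv : quotientMatrix m p q *ᵥ v = t • v := by
    apply leafConst_injective hm
    rw [← mulVec_leafConst, ← hxv, h, hxv, leafConst_smul]
  rw [← det_smul_one_sub_quotientMatrix]
  exact exists_mulVec_eq_zero_iff.mp
    ⟨v, hv, by rw [sub_mulVec, smul_mulVec, one_mulVec, hBv, sub_self]⟩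

end K2mLaplacian

lemma quadratic_eq_zero_iff_of_sq_eq {b c s t : ℝ} (hs : s ^ 2 = b ^ 2 - 4 * c) :
    t ^ 2 - b * t + c = 0 ↔ t = b / 2 + s / 2 ∨ t = b / 2 - s / 2 := by
  rw [show t ^ 2 - b * t + c = (t - (b / 2 + s / 2)) * (t - (b / 2 - s / 2)) by
    linear_combination (1 / 4 : ℝ) * hs]
  rw [mul_eq_zero, sub_eq_zero, sub_eq_zero]

lemma sq_sub_mul_mul_add_sq_eq_zero {m p q : ℝ} (hm : 2 ≤ m)
    (hq : q = 1 / 2 * (m + Real.sqrt (m ^ 2 - 4)) * p) : q ^ 2 - m * p * q + p ^ 2 = 0 := by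
  have hs : Real.sqrt (m ^ 2 - 4) ^ 2 = m ^ 2 - 4 := Real.sq_sqrt (by nlinarith)
  rw [hq]
  linear_combination (p ^ 2 / 4) * hs

/-- The nonzero Laplacian eigenvalues of the weighted `K(2,m)` are `p+q` and
`(m+1)(p+q)/2 ± √((m+1)²(p+q)² - 4pqm(m+2))/2`; choosing `q = (m + √(m²-4))p/2`
reduces the set of distinct nonzero eigenvalues to exactly two elements. -/
theorem K2m_symmetry_breaking (m : ℕ) (hm : 2 ≤ m) (p q : ℝ) (hp : 0 < p) (hq : 0 < q) :
    (∀ lam ∈ ({p + q,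
        (m + 1) * (p + q) / 2 +
          Real.sqrt ((m + 1) ^ 2 * (p + q) ^ 2 - 4 * p * q * m * (m + 2)) / 2,
        (m + 1) * (p + q) / 2 -
          Real.sqrt ((m + 1) ^ 2 * (p + q) ^ 2 - 4 * p * q * m * (m + 2)) / 2} : Set ℝ),
      ∃ x : Fin 2 ⊕ Fin m → ℝ, x ≠ 0 ∧ K2mLaplacian m p q *ᵥ x = lam • x) ∧
    (∀ (t : ℝ) (x : Fin 2 ⊕ Fin m → ℝ), x ≠ 0 → K2mLaplacian m p q *ᵥ x = t • x →
      t = 0 ∨ t ∈ ({p + q,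
        (m + 1) * (p + q) / 2 +
          Real.sqrt ((m + 1) ^ 2 * (p + q) ^ 2 - 4 * p * q * m * (m + 2)) / 2,
        (m + 1) * (p + q) / 2 -
          Real.sqrt ((m + 1) ^ 2 * (p + q) ^ 2 - 4 * p * q * m * (m + 2)) / 2} : Set ℝ)) ∧
    (q = (1 / 2) * (m + Real.sqrt ((m : ℝ) ^ 2 - 4)) * p →
      ({p + q,
        (m + 1) * (p + q) / 2 +
          Real.sqrt ((m + 1) ^ 2 * (p + q) ^ 2 - 4 * p * q * m * (m + 2)) / 2,
        (m + 1) * (p + q) / 2 -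
          Real.sqrt ((m + 1) ^ 2 * (p + q) ^ 2 - 4 * p * q * m * (m + 2)) / 2} : Set ℝ).ncard
        = 2) := by
  have hmR : (2 : ℝ) ≤ m := by exact_mod_cast hm
  set D : ℝ := (m + 1) ^ 2 * (p + q) ^ 2 - 4 * p * q * m * (m + 2) with hD
  have hD_nonneg : 0 ≤ D := by
    rw [show D = ((m + 1) * (p - q)) ^ 2 + 4 * p * q by ring]
    positivity
  have hmem : ∀ t,
      t ∈ ({p + q, (m + 1) * (p + q) / 2 + √D / 2, (m + 1) * (p + q) / 2 - √D / 2} : Set ℝ) ↔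
        t = p + q ∨ t ^ 2 - (m + 1) * (p + q) * t + m * (m + 2) * p * q = 0 := by
    intro t
    rw [quadratic_eq_zero_iff_of_sq_eq (s := √D) (by rw [Real.sq_sqrt hD_nonneg]; ring)]
    simp only [Set.mem_insert_iff, Set.mem_singleton_iff]
  refine ⟨fun t ht => ?_, fun t x hx h => ?_, fun hq_eq => ?_⟩
  · rcases (hmem t).mp ht with rfl | hquad
    · exact K2mLaplacian.exists_mulVec_eq_add_smul hm
    · exact K2mLaplacian.exists_mulVec_eq_smul_of_quadratic (by omega) hquad
  · rcases K2mLaplacian.eq_add_or_mul_quadratic_eq_zero (by omega) hx h with ht | ht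
    · exact Or.inr ((hmem t).mpr (Or.inl ht))
    · exact (mul_eq_zero.mp ht).imp_right fun hquad => (hmem t).mpr (Or.inr hquad)
  · have hsqrt : √D = (m - 1) * (p + q) := by
      rw [hD, show (m + 1) ^ 2 * (p + q) ^ 2 - 4 * p * q * m * (m + 2) = ((m - 1) * (p + q)) ^ 2
        by linear_combination 4 * m * sq_sub_mul_mul_add_sq_eq_zero hmR hq_eq]
      exact Real.sqrt_sq (by nlinarith)
    rw [hsqrt, show (m + 1) * (p + q) / 2 + (m - 1) * (p + q) / 2 = m * (p + q) by ring,
      show (m + 1) * (p + q) / 2 - (m - 1) * (p + q) / 2 = p + q by ring,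
      Set.pair_comm, Set.insert_eq_of_mem (Set.mem_insert _ _)]
    exact Set.ncard_pair (by nlinarith)
end

section
/- Let 0 < z < 1 and a = 1, and let P be symmetric with P·1 = 1 and SLEM μ(P). Define P₋ = (P - zI)/(1-z) and P₊ = (P + zI)/(1+z). Then max{μ(P₋), μ(P₊)} = (μ(P) + z)/(1 - z), and this is < 1 if and only if μ(P) < 1 - 2z. -/
/-!
An affine map `t ↦ c * (t + s)` with `c > 0` carries the centred eigenvalues of `P` onto those of
`c • (P + s • 1)`, and `|c * (t + s)| ≤ c * (μ(P) + |s|)`, with equality at `t = μ(P)` when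
`s ≥ 0` and at `t = -μ(P)` when `s ≤ 0`. Hence `μ(P₊) = (μ + z)/(1 + z)` and
`μ(P₋) = (μ + z)/(1 - z)`, the latter being the larger one.
-/

open Matrix

/-- Second largest eigenvalue modulus: supremum of `|t|` over eigenvalues `t` of `P`
possessing an eigenvector orthogonal to the all-ones vector. -/
noncomputable def slem {N : ℕ} (P : Matrix (Fin N) (Fin N) ℝ) : ℝ :=
  sSup {r | ∃ (t : ℝ) (x : Fin N → ℝ), x ≠ 0 ∧ (∑ i, x i) = 0 ∧ P *ᵥ x = t • x ∧ r = |t|}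

section CenteredSpectrum

variable {N : ℕ} (P : Matrix (Fin N) (Fin N) ℝ)

def centeredSpectrum : Set ℝ :=
  {t | ∃ x : Fin N → ℝ, x ≠ 0 ∧ (∑ i, x i) = 0 ∧ P *ᵥ x = t • x}

theorem slem_eq_sSup_abs_image : slem P = sSup (abs '' centeredSpectrum P) := by
  unfold slem centeredSpectrum
  congr 1
  ext r
  constructor
  · rintro ⟨t, x, hx, hsum, heig, rfl⟩
    exact ⟨t, ⟨x, hx, hsum, heig⟩, rfl⟩
  · rintro ⟨t, ⟨x, hx, hsum, heig⟩, rfl⟩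
    exact ⟨t, x, hx, hsum, heig, rfl⟩

theorem centeredSpectrum_finite : (centeredSpectrum P).Finite :=
  (Module.End.finite_hasEigenvalue (toLin' P)).subset fun _ ⟨_, hx, _, heig⟩ =>
    Module.End.hasEigenvalue_of_hasEigenvector ⟨Module.End.mem_eigenspace_iff.2 heig, hx⟩

variable {P}

theorem abs_le_slem {t : ℝ} (ht : t ∈ centeredSpectrum P) : |t| ≤ slem P := by
  rw [slem_eq_sSup_abs_image]
  exact le_csSup ((centeredSpectrum_finite P).image _).bddAbove ⟨t, ht, rfl⟩

theorem centeredSpectrum_smul_add_smul_one {c : ℝ} (hc : c ≠ 0) (s : ℝ) :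
    centeredSpectrum (c • (P + s • 1)) = (fun t => c * (t + s)) '' centeredSpectrum P := by
  have hmulVec (x : Fin N → ℝ) : (c • (P + s • 1)) *ᵥ x = c • (P *ᵥ x + s • x) := by
    rw [smul_mulVec, add_mulVec, smul_mulVec, one_mulVec]
  ext t
  constructor
  · rintro ⟨x, hx, hsum, heig⟩
    refine ⟨c⁻¹ * t - s, ⟨x, hx, hsum, ?_⟩, by field_simp; ring⟩
    rw [hmulVec] at heig
    have hshift : P *ᵥ x + s • x = c⁻¹ • t • x := by
      rw [← heig, smul_smul, inv_mul_cancel₀ hc, one_smul]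
    rw [sub_smul, mul_smul, ← hshift, add_sub_cancel_right]
  · rintro ⟨w, ⟨x, hx, hsum, heig⟩, rfl⟩
    exact ⟨x, hx, hsum, by rw [hmulVec, heig, ← add_smul, smul_smul]⟩

theorem slem_smul_add_smul_one {c s w : ℝ} (hc : 0 < c) (hw : w ∈ centeredSpectrum P)
    (hws : |w + s| = slem P + |s|) : slem (c • (P + s • 1)) = c * (slem P + |s|) := by
  rw [slem_eq_sSup_abs_image, centeredSpectrum_smul_add_smul_one hc.ne', Set.image_image]
  refine IsGreatest.csSup_eq
    ⟨⟨w, hw, show |c * (w + s)| = _ by rw [abs_mul, abs_of_pos hc, hws]⟩, ?_⟩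
  rintro _ ⟨t, ht, rfl⟩
  calc |c * (t + s)| = c * |t + s| := by rw [abs_mul, abs_of_pos hc]
    _ ≤ c * (slem P + |s|) := by
      gcongr
      exact (abs_add_le t s).trans (by gcongr; exact abs_le_slem ht)

theorem slem_nonneg_of_mem {t : ℝ} (ht : t ∈ centeredSpectrum P) : 0 ≤ slem P :=
  (abs_nonneg t).trans (abs_le_slem ht)

theorem slem_smul_add_smul_one_of_nonneg {c s : ℝ} (hc : 0 < c) (hs : 0 ≤ s)
    (hμ : slem P ∈ centeredSpectrum P) : slem (c • (P + s • 1)) = c * (slem P + s) := by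
  have hμ0 := slem_nonneg_of_mem hμ
  have hws : |slem P + s| = slem P + |s| := by
    rw [abs_of_nonneg hs, abs_of_nonneg (by positivity)]
  rw [slem_smul_add_smul_one hc hμ hws, abs_of_nonneg hs]

theorem slem_smul_sub_smul_one_of_nonneg {c s : ℝ} (hc : 0 < c) (hs : 0 ≤ s)
    (hμ : -slem P ∈ centeredSpectrum P) : slem (c • (P - s • 1)) = c * (slem P + s) := by
  have hμ0 := slem_nonneg_of_mem hμ
  have hws : |-slem P + -s| = slem P + |-s| := by
    rw [abs_neg, abs_of_nonneg hs, ← neg_add, abs_neg, abs_of_nonneg (by positivity)]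
  rw [sub_eq_add_neg P, ← neg_smul, slem_smul_add_smul_one hc hμ hws, abs_neg, abs_of_nonneg hs]

end CenteredSpectrum

theorem alternating_steps_slem_a_one_general {N : ℕ} (z μ : ℝ) (hz0 : 0 < z) (hz1 : z < 1)
    (P : Matrix (Fin N) (Fin N) ℝ)
    (hμ : slem P = μ)
    (hcentp : ∃ x : Fin N → ℝ, x ≠ 0 ∧ (∑ i, x i) = 0 ∧ P *ᵥ x = μ • x)
    (hcentm : ∃ x : Fin N → ℝ, x ≠ 0 ∧ (∑ i, x i) = 0 ∧ P *ᵥ x = (-μ) • x) :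
    max (slem ((1 - z)⁻¹ • (P - z • 1))) (slem ((1 + z)⁻¹ • (P + z • 1)))
      = (μ + z) / (1 - z) ∧
    ((μ + z) / (1 - z) < 1 ↔ μ < 1 - 2 * z) := by
  subst hμ
  have hμ0 : 0 ≤ slem P := slem_nonneg_of_mem hcentp
  have hminus : slem ((1 - z)⁻¹ • (P - z • 1)) = (slem P + z) / (1 - z) := by
    rw [slem_smul_sub_smul_one_of_nonneg (inv_pos.2 (sub_pos.2 hz1)) hz0.le hcentm, inv_mul_eq_div]
  have hplus : slem ((1 + z)⁻¹ • (P + z • 1)) = (slem P + z) / (1 + z) := by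
    rw [slem_smul_add_smul_one_of_nonneg (by positivity) hz0.le hcentp, inv_mul_eq_div]
  have hle : (slem P + z) / (1 + z) ≤ (slem P + z) / (1 - z) :=
    div_le_div_of_nonneg_left (by positivity) (by linarith) (by linarith)
  refine ⟨by rw [hminus, hplus, max_eq_left hle], ?_⟩
  rw [div_lt_one (by linarith)]
  constructor <;> intro <;> linarith

/-- With `a = 1`, the alternating steps `P₋ = (P - zI)/(1-z)` and `P₊ = (P + zI)/(1+z)` satisfy
`max{μ(P₋), μ(P₊)} = (μ(P)+z)/(1-z)`, which is `< 1` iff `μ(P) < 1 - 2z`. -/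
theorem alternating_steps_slem_a_one {N : ℕ} (z μ : ℝ) (hz0 : 0 < z) (hz1 : z < 1)
    (P : Matrix (Fin N) (Fin N) ℝ) (hsymm : P.IsSymm) (hP1 : P *ᵥ 1 = 1)
    (hμ : slem P = μ)
    (hcentp : ∃ x : Fin N → ℝ, x ≠ 0 ∧ (∑ i, x i) = 0 ∧ P *ᵥ x = μ • x)
    (hcentm : ∃ x : Fin N → ℝ, x ≠ 0 ∧ (∑ i, x i) = 0 ∧ P *ᵥ x = (-μ) • x) :
    max (slem ((1 - z)⁻¹ • (P - z • 1))) (slem ((1 + z)⁻¹ • (P + z • 1)))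
      = (μ + z) / (1 - z) ∧
    ((μ + z) / (1 - z) < 1 ↔ μ < 1 - 2 * z) :=
  alternating_steps_slem_a_one_general z μ hz0 hz1 P hμ hcentp hcentm
end

section
/- Let 0 < z < 1 and P symmetric with P·1 = 1, SLEM μ(P) < 1, and suppose under arbitrary link failures each step applies a matrix whose nontrivial eigenvalues lie in [-1, 1]. The worst-case two-step gain on a nontrivial eigenvector under resonant link failure of the alternating scheme P₋ = (P - zI)/(1-z), P₊ = (P + zI)/(1+z) is |(-μ(P) - z)/(1 - z)| (with the other factor at most 1 in modulus), and this is < 1 if and only if z < (1 - μ(P))/2. -/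
open Matrix

/-!
The `P₋` factor is bounded through `|s - z| ≤ |s| + z ≤ μ + z`, with equality at `s = -μ`,
and for `z ≥ 0` the `P₊` factor maps `[-1, 1]` into itself, so the worst two-step gain is
`(μ + z)/(1 - z)`, attained with `t = 1`. It is `< 1` exactly when `μ + 2z < 1`.
-/

lemma abs_add_div_one_add_le_one {z t : ℝ} (hz : 0 ≤ z) (ht : |t| ≤ 1) :
    |(t + z) / (1 + z)| ≤ 1 := by
  have h1z : 0 < 1 + z := by linarith
  rw [abs_div, abs_of_pos h1z, div_le_one h1z]
  calc |t + z| ≤ |t| + |z| := abs_add_le t z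
    _ ≤ 1 + z := by rw [abs_of_nonneg hz]; linarith

lemma abs_sub_div_one_sub_le {z s μ : ℝ} (hz0 : 0 ≤ z) (hz1 : z < 1) (hs : |s| ≤ μ) :
    |(s - z) / (1 - z)| ≤ (μ + z) / (1 - z) := by
  have h1z : 0 < 1 - z := by linarith
  rw [abs_div, abs_of_pos h1z]
  gcongr
  calc |s - z| ≤ |s| + |z| := abs_sub s z
    _ ≤ μ + z := by rw [abs_of_nonneg hz0]; linarith

lemma abs_neg_sub_div_one_sub {z μ : ℝ} (hz1 : z < 1) (hμz : 0 ≤ μ + z) :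
    |(-μ - z) / (1 - z)| = (μ + z) / (1 - z) := by
  rw [show -μ - z = -(μ + z) by ring, neg_div, abs_neg,
    abs_of_nonneg (div_nonneg hμz (by linarith))]

lemma add_div_one_sub_lt_one_iff {z μ : ℝ} (hz1 : z < 1) :
    (μ + z) / (1 - z) < 1 ↔ z < (1 - μ) / 2 := by
  rw [div_lt_one (by linarith)]
  constructor <;> intro <;> linarith

theorem resonant_link_failure_general (z μ : ℝ) (hz0 : 0 < z) (hz1 : z < 1)
    (hμ0 : 0 ≤ μ) :
    (∀ s t : ℝ, |s| ≤ μ → |t| ≤ 1 →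
      |((s - z) / (1 - z)) * ((t + z) / (1 + z))| ≤ |(-μ - z) / (1 - z)|) ∧
    (∀ t : ℝ, |t| ≤ 1 → |(t + z) / (1 + z)| ≤ 1) ∧
    |(((-μ) - z) / (1 - z)) * ((1 + z) / (1 + z))| = |(-μ - z) / (1 - z)| ∧
    (|(-μ - z) / (1 - z)| < 1 ↔ z < (1 - μ) / 2) := by
  have worst : |(-μ - z) / (1 - z)| = (μ + z) / (1 - z) :=
    abs_neg_sub_div_one_sub hz1 (by linarith)
  refine ⟨fun s t hs ht => ?_, fun _ => abs_add_div_one_add_le_one hz0.le, ?_, ?_⟩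
  · rw [abs_mul, worst]
    calc |(s - z) / (1 - z)| * |(t + z) / (1 + z)| ≤ (μ + z) / (1 - z) * 1 :=
          mul_le_mul (abs_sub_div_one_sub_le hz0.le hz1 hs)
            (abs_add_div_one_add_le_one hz0.le ht) (abs_nonneg _) (worst ▸ abs_nonneg _)
      _ = (μ + z) / (1 - z) := mul_one _
  · rw [div_self (by linarith : (1 : ℝ) + z ≠ 0), mul_one]
  · rw [worst]
    exact add_div_one_sub_lt_one_iff hz1

/-- Resonant link failure: the worst-case two-step gain of the alternating scheme on a
nontrivial eigenvector, over an eigenvalue `s` with `|s| ≤ μ(P)` in the `P₋`-step and an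
eigenvalue `t` with `|t| ≤ 1` in the failed `P₊`-step, is `|(-μ(P) - z)/(1 - z)|`
(the `P₊` factor being at most 1 in modulus), and this is `< 1` iff `z < (1 - μ(P))/2`. -/
theorem resonant_link_failure (z μ : ℝ) (hz0 : 0 < z) (hz1 : z < 1)
    {N : ℕ} (P : Matrix (Fin N) (Fin N) ℝ) (hsymm : P.IsSymm) (hP1 : P *ᵥ 1 = 1)
    (hμ : slem P = μ) (hμ0 : 0 ≤ μ) (hμ1 : μ < 1) :
    (∀ s t : ℝ, |s| ≤ μ → |t| ≤ 1 →
      |((s - z) / (1 - z)) * ((t + z) / (1 + z))| ≤ |(-μ - z) / (1 - z)|) ∧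
    (∀ t : ℝ, |t| ≤ 1 → |(t + z) / (1 + z)| ≤ 1) ∧
    |(((-μ) - z) / (1 - z)) * ((1 + z) / (1 + z))| = |(-μ - z) / (1 - z)| ∧
    (|(-μ - z) / (1 - z)| < 1 ↔ z < (1 - μ) / 2) :=
  resonant_link_failure_general z μ hz0 hz1 hμ0
end

section
/- Let G be a connected undirected graph and G² its square (nodes adjacent in G² iff connected in G by a path of length at most 2). For any symmetric P supported on G with P·1 = 1 and any second-order polynomial p₂ with p₂(1) = 1, the matrix p₂(P) is a symmetric matrix supported on G² with p₂(P)·1 = 1. Consequently, the optimal accelerated rate μ₂(P*_{p₂}) over P supported on G is at least the optimal single-step SLEM μ(P*_{G²}) over all weight matrices supported on G². -/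
open Matrix

/-- `P` is supported on `G`: off-diagonal entries vanish outside the edges of `G`. -/
def SupportedOn {N : ℕ} (G : SimpleGraph (Fin N)) (P : Matrix (Fin N) (Fin N) ℝ) : Prop :=
  ∀ i j : Fin N, i ≠ j → ¬G.Adj i j → P i j = 0

/-- Adjacency of the square graph `G²`: joined in `G` by a path of length at most 2. -/
def SquareAdj {N : ℕ} (G : SimpleGraph (Fin N)) (i j : Fin N) : Prop :=
  i ≠ j ∧ (G.Adj i j ∨ ∃ k, G.Adj i k ∧ G.Adj k j)

/-!
Each term `P i k * P k j` of `(P * P) i j` vanishes unless `i`, `k`, `j` is a walk of length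
at most 2 in `G`, so `c₀ I + c₁ P + c₂ P²` is a feasible weight matrix on `G²`. Every accelerated
rate is therefore the SLEM of such a matrix, and the infimum over `G²` (bounded below by `0`)
can only be smaller.
-/

section QuadraticPolynomial

variable {n α : Type*} [Fintype n] [DecidableEq n]

lemma Matrix.IsSymm.quadratic [CommSemiring α] {A : Matrix n n α} (hA : A.IsSymm)
    (c₀ c₁ c₂ : α) : (c₀ • (1 : Matrix n n α) + c₁ • A + c₂ • (A * A)).IsSymm :=
  ((isSymm_one.smul c₀).add (hA.smul c₁)).add <| by simpa only [sq] using (hA.pow 2).smul c₂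

lemma Matrix.quadratic_mulVec_eq_self [CommSemiring α] {A : Matrix n n α} {v : n → α}
    (hv : A *ᵥ v = v) {c₀ c₁ c₂ : α} (hc : c₀ + c₁ + c₂ = 1) :
    (c₀ • (1 : Matrix n n α) + c₁ • A + c₂ • (A * A)) *ᵥ v = v := by
  rw [add_mulVec, add_mulVec, smul_mulVec, smul_mulVec, smul_mulVec, one_mulVec,
    ← mulVec_mulVec, hv, hv, ← add_smul, ← add_smul, hc, one_smul]

end QuadraticPolynomial

variable {N : ℕ} {G : SimpleGraph (Fin N)} {P : Matrix (Fin N) (Fin N) ℝ}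

lemma SupportedOn.mul_self_apply_eq_zero (hP : SupportedOn G P) {i j : Fin N} (hij : i ≠ j)
    (hsq : ¬SquareAdj G i j) : (P * P) i j = 0 := by
  have hPij : P i j = 0 := hP i j hij fun h => hsq ⟨hij, Or.inl h⟩
  rw [mul_apply]
  refine Finset.sum_eq_zero fun k _ => ?_
  by_cases hki : k = i
  · rw [hki, hPij, mul_zero]
  by_cases hkj : k = j
  · rw [hkj, hPij, zero_mul]
  rcases not_and_or.mp fun h => hsq ⟨hij, Or.inr ⟨k, h⟩⟩ with hik | hkj'
  · rw [hP i k (Ne.symm hki) hik, zero_mul]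
  · rw [hP k j hkj hkj', mul_zero]

lemma SupportedOn.quadratic_apply_eq_zero (hP : SupportedOn G P) (c₀ c₁ c₂ : ℝ) {i j : Fin N}
    (hij : i ≠ j) (hsq : ¬SquareAdj G i j) :
    (c₀ • (1 : Matrix (Fin N) (Fin N) ℝ) + c₁ • P + c₂ • (P * P)) i j = 0 := by
  simp only [Matrix.add_apply, Matrix.smul_apply, one_apply_ne hij,
    hP i j hij fun h => hsq ⟨hij, Or.inl h⟩, hP.mul_self_apply_eq_zero hij hsq, smul_zero, add_zero]

lemma slem_nonneg (Q : Matrix (Fin N) (Fin N) ℝ) : 0 ≤ slem Q :=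
  Real.sSup_nonneg fun _ ⟨t, _, _, _, _, hr⟩ => hr ▸ abs_nonneg t

theorem square_graph_lower_bound_general {N : ℕ} (G : SimpleGraph (Fin N)) :
    (∀ (P : Matrix (Fin N) (Fin N) ℝ) (c₀ c₁ c₂ : ℝ),
      P.IsSymm → SupportedOn G P → P *ᵥ 1 = 1 → c₀ + c₁ + c₂ = 1 →
      (c₀ • (1 : Matrix (Fin N) (Fin N) ℝ) + c₁ • P + c₂ • (P * P)).IsSymm ∧
      (∀ i j : Fin N, i ≠ j → ¬SquareAdj G i j →
        (c₀ • (1 : Matrix (Fin N) (Fin N) ℝ) + c₁ • P + c₂ • (P * P)) i j = 0) ∧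
      (c₀ • (1 : Matrix (Fin N) (Fin N) ℝ) + c₁ • P + c₂ • (P * P)) *ᵥ 1 = 1) ∧
    sInf {r | ∃ (Q : Matrix (Fin N) (Fin N) ℝ), Q.IsSymm ∧
        (∀ i j : Fin N, i ≠ j → ¬SquareAdj G i j → Q i j = 0) ∧ Q *ᵥ 1 = 1 ∧ r = slem Q} ≤
    sInf {r | ∃ (P : Matrix (Fin N) (Fin N) ℝ) (c₀ c₁ c₂ : ℝ), P.IsSymm ∧ SupportedOn G P ∧
        P *ᵥ 1 = 1 ∧ c₀ + c₁ + c₂ = 1 ∧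
        r = slem (c₀ • (1 : Matrix (Fin N) (Fin N) ℝ) + c₁ • P + c₂ • (P * P))} := by
  refine ⟨fun P c₀ c₁ c₂ hsym hP hone hc => ⟨hsym.quadratic c₀ c₁ c₂,
    fun _ _ => hP.quadratic_apply_eq_zero c₀ c₁ c₂, quadratic_mulVec_eq_self hone hc⟩,
    csInf_le_csInf ?_ ?_ ?_⟩
  · exact ⟨0, fun _ ⟨Q, _, _, _, hr⟩ => hr ▸ slem_nonneg Q⟩
  · exact ⟨_, 1, 1, 0, 0, isSymm_one, fun i j hij _ => one_apply_ne hij, one_mulVec 1,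
      by norm_num, rfl⟩
  · rintro r ⟨P, c₀, c₁, c₂, hsym, hP, hone, hc, rfl⟩
    exact ⟨_, hsym.quadratic c₀ c₁ c₂, fun _ _ => hP.quadratic_apply_eq_zero c₀ c₁ c₂,
      quadratic_mulVec_eq_self hone hc, rfl⟩

/-- Any second-order polynomial `p₂(P) = c₀I + c₁P + c₂P²` (with `p₂(1)=1`) of a weight
matrix supported on `G` is a symmetric weight matrix supported on `G²`; consequently the
optimal `p₂`-accelerated rate on `G` is bounded below by the fastest single-step SLEM
achievable on `G²`. -/
theorem square_graph_lower_bound {N : ℕ} (G : SimpleGraph (Fin N)) (hconn : G.Connected) :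
    (∀ (P : Matrix (Fin N) (Fin N) ℝ) (c₀ c₁ c₂ : ℝ),
      P.IsSymm → SupportedOn G P → P *ᵥ 1 = 1 → c₀ + c₁ + c₂ = 1 →
      (c₀ • (1 : Matrix (Fin N) (Fin N) ℝ) + c₁ • P + c₂ • (P * P)).IsSymm ∧
      (∀ i j : Fin N, i ≠ j → ¬SquareAdj G i j →
        (c₀ • (1 : Matrix (Fin N) (Fin N) ℝ) + c₁ • P + c₂ • (P * P)) i j = 0) ∧
      (c₀ • (1 : Matrix (Fin N) (Fin N) ℝ) + c₁ • P + c₂ • (P * P)) *ᵥ 1 = 1) ∧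
    sInf {r | ∃ (Q : Matrix (Fin N) (Fin N) ℝ), Q.IsSymm ∧
        (∀ i j : Fin N, i ≠ j → ¬SquareAdj G i j → Q i j = 0) ∧ Q *ᵥ 1 = 1 ∧ r = slem Q} ≤
    sInf {r | ∃ (P : Matrix (Fin N) (Fin N) ℝ) (c₀ c₁ c₂ : ℝ), P.IsSymm ∧ SupportedOn G P ∧
        P *ᵥ 1 = 1 ∧ c₀ + c₁ + c₂ = 1 ∧
        r = slem (c₀ • (1 : Matrix (Fin N) (Fin N) ℝ) + c₁ • P + c₂ • (P * P))} :=
  square_graph_lower_bound_general G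
end
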